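/- Let p be a prime and let g(x) = b_e x^e + ⋯ + b_0 ∈ ℚ[x] have degree e ≥ 1 with b_0 ≠ 0, and suppose NP_p(g) has successive vertices (0, ν_p(b_e)), (e−m_1, ν_p(b_{m_1})), …, (e−m_{t−1}, ν_p(b_{m_{t−1}})), (e, ν_p(b_0)), where e = m_0 > m_1 > ⋯ > m_t = 0, with slopes λ_i = (ν_p(b_{m_i}) − ν_p(b_{m_{i−1}}))/(m_{i−1} − m_i). Let u be an integer with u > |λ_j| for every 1 ≤ j ≤ t, and let β be a positive integer with β ≤ d and gcd(β, u) = 1. Suppose f(x) = a_d x^d + ⋯ + a_0 ∈ ℚ[x] has degree d with ν_p(a_d) = 0 and ν_p(a_i) ≥ (u/β)(d−i) for every 0 ≤ i ≤ d with a_i ≠ 0. Then for every integer n ≥ 1, the Newton polygon NP_p(g(f^n(x))) of the composition g ∘ f^n has successive vertices (0, ν_p(b_e)), (d^n(e−m_1), ν_p(b_{m_1})), …, (d^n(e−m_{t−1}), ν_p(b_{m_{t−1}})), (d^n e, ν_p(b_0)). -/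

import Mathlib

open Polynomial

/-- The `n`-th compositional iterate of `f`: `f^0 = X`, `f^{n+1} = f ∘ f^n`. -/
noncomputable def polyIter (f : Polynomial ℚ) : ℕ → Polynomial ℚ
  | 0 => Polynomial.X
  | n + 1 => f.comp (polyIter f n)

/-- The `p`-adic valuation of a rational number, viewed as a rational number. -/
def nuQ (p : ℕ) (x : ℚ) : ℚ := (padicValRat p x : ℚ)

/-- `NP_p(h)` has successive vertices `(xs 0, ys 0), …, (xs t, ys t)`:
the corresponding coefficients are nonzero and have the prescribed valuations,
the slopes are strictly increasing, and every point of the Newton diagram lies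
on or above the polygon. -/
def HasNPVertices (p : ℕ) (h : Polynomial ℚ) (t : ℕ) (xs : ℕ → ℕ) (ys : ℕ → ℚ) : Prop :=
  h.coeff 0 ≠ 0 ∧
  xs 0 = 0 ∧ xs t = h.natDegree ∧
  (∀ s, s < t → xs s < xs (s + 1)) ∧
  (∀ s, s ≤ t → h.coeff (h.natDegree - xs s) ≠ 0 ∧
      nuQ p (h.coeff (h.natDegree - xs s)) = ys s) ∧
  (∀ s, 1 ≤ s → s < t →
      (ys s - ys (s - 1)) / ((xs s : ℚ) - (xs (s - 1) : ℚ)) <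
        (ys (s + 1) - ys s) / ((xs (s + 1) : ℚ) - (xs s : ℚ))) ∧
  (∀ s, 1 ≤ s → s ≤ t → ∀ i, h.coeff i ≠ 0 →
      xs (s - 1) ≤ h.natDegree - i → h.natDegree - i ≤ xs s →
      ys (s - 1) + ((ys s - ys (s - 1)) / ((xs s : ℚ) - (xs (s - 1) : ℚ))) *
          (((h.natDegree - i : ℕ) : ℚ) - (xs (s - 1) : ℚ)) ≤ nuQ p (h.coeff i))

/-- The number of irreducible factors of a polynomial over `ℚ`,
counted with multiplicity. -/
noncomputable def numFactors (P : Polynomial ℚ) : ℕ :=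
  (UniqueFactorizationMonoid.factors P).card

/-- `f` is `p^r`-pure. -/
def IsPpure (p r : ℕ) (f : Polynomial ℚ) : Prop :=
  f.coeff 0 ≠ 0 ∧
  padicValRat p f.leadingCoeff = 0 ∧
  padicValRat p (f.coeff 0) = (r : ℤ) ∧
  ∀ i, 0 < i → i < f.natDegree → f.coeff i ≠ 0 →
    (r : ℚ) / (f.natDegree : ℚ) ≤ nuQ p (f.coeff i) / ((f.natDegree : ℚ) - (i : ℚ))

/-!
Put `D = deg F` and suppose every coefficient of `F` satisfies `ν(F_j) ≥ c (D - j)`. The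
coefficient of `x^i` in `g ∘ F` is `∑ b_k (F^k)_i`, and the term `b_k (F^k)_i` lies at least
`c (k D - i)` above the point `(D (deg g - k), ν(b_k))` of the diagram of `g` stretched
horizontally by `D`. When `c D` exceeds every slope of `NP_p(g)`, all these points lie on or above
the stretched polygon, and at a stretched vertex the single term `b_{m_s} lc(F)^{m_s}`, whose
valuation is `ν(b_{m_s})` because `lc(F)` is a `p`-adic unit, lies strictly below all the others.
For `F = f^n` one may take `D = d^n` and `c = (u/β) / d^(n-1)`, so that `c D = (u/β) d ≥ u`.
-/

section Valuation

variable {p : ℕ} [Fact p.Prime]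

lemma nuQ_mul {a b : ℚ} (ha : a ≠ 0) (hb : b ≠ 0) :
    nuQ p (a * b) = nuQ p a + nuQ p b := by
  simp [nuQ, padicValRat.mul ha hb]

lemma nuQ_pow (a : ℚ) (k : ℕ) : nuQ p (a ^ k) = k * nuQ p a := by
  simp [nuQ, padicValRat.pow]

lemma exists_nuQ_le_sum {ι : Type*} {s : Finset ι} {f : ι → ℚ}
    (hs : ∑ a ∈ s, f a ≠ 0) :
    ∃ a ∈ s, f a ≠ 0 ∧ nuQ p (f a) ≤ nuQ p (∑ a ∈ s, f a) := by
  classical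
  induction s using Finset.induction_on with
  | empty => simp at hs
  | insert a s ha ih =>
    rw [Finset.sum_insert ha] at hs ⊢
    by_cases hfa : f a = 0
    · obtain ⟨b, hb, hfb, hle⟩ := ih (by simpa [hfa] using hs)
      exact ⟨b, Finset.mem_insert_of_mem hb, hfb, by simpa [hfa] using hle⟩
    by_cases hrest : ∑ b ∈ s, f b = 0
    · exact ⟨a, Finset.mem_insert_self a s, hfa, by simp [hrest]⟩
    obtain ⟨b, hb, hfb, hle⟩ := ih hrest
    have hmin := padicValRat.min_le_padicValRat_add (p := p) hs
    rcases min_choice (padicValRat p (f a)) (padicValRat p (∑ b ∈ s, f b)) with h | h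
    · exact ⟨a, Finset.mem_insert_self a s, hfa, by unfold nuQ; exact_mod_cast h ▸ hmin⟩
    · refine ⟨b, Finset.mem_insert_of_mem hb, hfb, hle.trans ?_⟩
      unfold nuQ; exact_mod_cast h ▸ hmin

lemma le_nuQ_sum {ι : Type*} {s : Finset ι} {f : ι → ℚ} {c : ℚ} (hs : ∑ a ∈ s, f a ≠ 0)
    (h : ∀ a ∈ s, f a ≠ 0 → c ≤ nuQ p (f a)) : c ≤ nuQ p (∑ a ∈ s, f a) :=
  let ⟨a, ha, hfa, hle⟩ := exists_nuQ_le_sum hs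
  (h a ha hfa).trans hle

lemma nuQ_sum_eq_of_lt {ι : Type*} [DecidableEq ι] {s : Finset ι} {f : ι → ℚ} {a₀ : ι}
    (ha₀ : a₀ ∈ s) (hfa₀ : f a₀ ≠ 0)
    (h : ∀ a ∈ s, a ≠ a₀ → f a ≠ 0 → nuQ p (f a₀) < nuQ p (f a)) :
    ∑ a ∈ s, f a ≠ 0 ∧ nuQ p (∑ a ∈ s, f a) = nuQ p (f a₀) := by
  rw [← Finset.add_sum_erase s f ha₀]
  by_cases hrest : ∑ a ∈ s.erase a₀, f a = 0
  · simp [hrest, hfa₀]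
  obtain ⟨b, hb, hfb, hle⟩ := exists_nuQ_le_sum (p := p) hrest
  have hlt : padicValRat p (f a₀) < padicValRat p (∑ a ∈ s.erase a₀, f a) := by
    have := (h b (Finset.mem_of_mem_erase hb) (Finset.ne_of_mem_erase hb) hfb).trans_le hle
    unfold nuQ at this; exact_mod_cast this
  have hne : f a₀ + ∑ a ∈ s.erase a₀, f a ≠ 0 := by
    intro h0
    rw [eq_neg_of_add_eq_zero_right h0, padicValRat.neg] at hlt
    exact hlt.false
  exact ⟨hne, by simp [nuQ, padicValRat.add_eq_of_lt hne hfa₀ hrest hlt]⟩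

end Valuation

lemma coeff_comp_eq_sum (g F : ℚ[X]) (i : ℕ) :
    (g.comp F).coeff i = ∑ k ∈ g.support, g.coeff k * (F ^ k).coeff i := by
  rw [comp_eq_sum_left, Polynomial.sum_def, finsetSum_coeff]
  simp only [coeff_C_mul]

/-- With abscissae measured from a virtual degree `D ≥ deg h`, the Newton diagram of `h`
lies on or above the line of slope `c` through the origin. -/
def NewtonDiagramAbove (p : ℕ) (c : ℚ) (D : ℕ) (h : ℚ[X]) : Prop :=
  ∀ i, h.coeff i ≠ 0 → i ≤ D ∧ c * ((D : ℚ) - i) ≤ nuQ p (h.coeff i)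

namespace NewtonDiagramAbove

variable {p : ℕ} {c : ℚ}

lemma mono {c' : ℚ} {D : ℕ} {h : ℚ[X]} (hh : NewtonDiagramAbove p c D h) (hc : c' ≤ c) :
    NewtonDiagramAbove p c' D h := fun i hi ↦ by
  obtain ⟨hiD, hval⟩ := hh i hi
  have : (i : ℚ) ≤ D := by exact_mod_cast hiD
  exact ⟨hiD, le_trans (by nlinarith) hval⟩

lemma one : NewtonDiagramAbove p c 0 1 := fun i hi ↦ by
  obtain rfl : i = 0 := by by_contra h0; simp [coeff_one, h0] at hi
  simp [nuQ]

variable [Fact p.Prime]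

lemma mul {D₁ D₂ : ℕ} {h₁ h₂ : ℚ[X]} (hh₁ : NewtonDiagramAbove p c D₁ h₁)
    (hh₂ : NewtonDiagramAbove p c D₂ h₂) :
    NewtonDiagramAbove p c (D₁ + D₂) (h₁ * h₂) := by
  intro i hi
  rw [coeff_mul] at hi ⊢
  refine ⟨?_, le_nuQ_sum hi fun x hx hxne ↦ ?_⟩
  · obtain ⟨x, hx, hxne⟩ := Finset.exists_ne_zero_of_sum_ne_zero hi
    rw [← Finset.HasAntidiagonal.mem_antidiagonal.mp hx]
    exact add_le_add (hh₁ _ (left_ne_zero_of_mul hxne)).1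
      (hh₂ _ (right_ne_zero_of_mul hxne)).1
  · have hx : (x.1 : ℚ) + x.2 = i := by
      exact_mod_cast Finset.HasAntidiagonal.mem_antidiagonal.mp hx
    rw [nuQ_mul (left_ne_zero_of_mul hxne) (right_ne_zero_of_mul hxne)]
    calc c * (((D₁ + D₂ : ℕ) : ℚ) - i) = c * (D₁ - x.1) + c * (D₂ - x.2) := by
          push_cast; rw [← hx]; ring
      _ ≤ _ :=
        add_le_add (hh₁ _ (left_ne_zero_of_mul hxne)).2 (hh₂ _ (right_ne_zero_of_mul hxne)).2

lemma pow {D : ℕ} {h : ℚ[X]} (hh : NewtonDiagramAbove p c D h) (k : ℕ) :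
    NewtonDiagramAbove p c (k * D) (h ^ k) := by
  induction k with
  | zero => simpa using one
  | succ k ih => simpa [pow_succ, add_mul] using ih.mul hh

lemma comp {γ : ℚ} {d D : ℕ} {f F : ℚ[X]} (hf : NewtonDiagramAbove p γ d f)
    (hF : NewtonDiagramAbove p c D F) (hcγ : c * D ≤ γ) :
    NewtonDiagramAbove p c (d * D) (f.comp F) := by
  intro i hi
  rw [coeff_comp_eq_sum] at hi ⊢
  refine ⟨?_, le_nuQ_sum hi fun k _ hk ↦ ?_⟩
  · obtain ⟨k, -, hk⟩ := Finset.exists_ne_zero_of_sum_ne_zero hi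
    calc i ≤ k * D := ((hF.pow k) i (right_ne_zero_of_mul hk)).1
      _ ≤ d * D := Nat.mul_le_mul_right _ (hf k (left_ne_zero_of_mul hk)).1
  · obtain ⟨hkd, hfk⟩ := hf k (left_ne_zero_of_mul hk)
    have hFk := ((hF.pow k) i (right_ne_zero_of_mul hk)).2
    have hkd : (k : ℚ) ≤ d := by exact_mod_cast hkd
    rw [nuQ_mul (left_ne_zero_of_mul hk) (right_ne_zero_of_mul hk)]
    calc c * (((d * D : ℕ) : ℚ) - i) = c * D * (d - k) + c * (((k * D : ℕ) : ℚ) - i) := by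
          push_cast; ring
      _ ≤ γ * (d - k) + c * (((k * D : ℕ) : ℚ) - i) := by gcongr
      _ ≤ _ := add_le_add hfk hFk

end NewtonDiagramAbove

section Iterate

variable {f : ℚ[X]}

lemma polyIter_eq_iterate_comp (n : ℕ) : polyIter f n = f.comp^[n] X := by
  induction n with
  | zero => rfl
  | succ n ih => rw [Function.iterate_succ_apply', ← ih]; rfl

lemma natDegree_polyIter (n : ℕ) : (polyIter f n).natDegree = f.natDegree ^ n := by
  simp [polyIter_eq_iterate_comp]

lemma padicValRat_leadingCoeff_polyIter {p : ℕ} [Fact p.Prime] (hf : f.natDegree ≠ 0)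
    (hlc : padicValRat p f.leadingCoeff = 0) (n : ℕ) :
    padicValRat p (polyIter f n).leadingCoeff = 0 := by
  induction n with
  | zero => simp [polyIter]
  | succ n ih =>
    have hf0 : f.leadingCoeff ≠ 0 := by
      simpa using ne_zero_of_natDegree_gt (Nat.pos_of_ne_zero hf)
    have hFn : (polyIter f n).natDegree ≠ 0 := by rw [natDegree_polyIter]; exact pow_ne_zero _ hf
    have hF0 : (polyIter f n).leadingCoeff ≠ 0 := by
      simpa using ne_zero_of_natDegree_gt (Nat.pos_of_ne_zero hFn)
    rw [polyIter, leadingCoeff_comp hFn, padicValRat.mul hf0 (pow_ne_zero _ hF0),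
      padicValRat.pow, hlc, ih]
    simp

lemma NewtonDiagramAbove.polyIter_succ {p : ℕ} [Fact p.Prime] {γ : ℚ} {d : ℕ}
    (hf : NewtonDiagramAbove p γ d f) (hγ : 0 ≤ γ) (hd : 0 < d) (n : ℕ) :
    NewtonDiagramAbove p (γ / d ^ n) (d ^ (n + 1)) (polyIter f (n + 1)) := by
  induction n with
  | zero => simpa [polyIter] using hf
  | succ n ih =>
    have hdn : (0 : ℚ) < d ^ (n + 1) := by positivity
    have hslope : γ / d ^ (n + 1) ≤ γ / d ^ n :=
      div_le_div_of_nonneg_left hγ (by positivity)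
        (pow_le_pow_right₀ (by exact_mod_cast hd) n.le_succ)
    have := hf.comp (ih.mono hslope) (by push_cast; rw [div_mul_cancel₀ _ hdn.ne'])
    rwa [← pow_succ'] at this

end Iterate

section Segments

variable {xs : ℕ → ℕ} {ys : ℕ → ℚ}

def segSlope (xs : ℕ → ℕ) (ys : ℕ → ℚ) (s : ℕ) : ℚ :=
  (ys s - ys (s - 1)) / ((xs s : ℚ) - xs (s - 1))

def segLine (xs : ℕ → ℕ) (ys : ℕ → ℚ) (s : ℕ) (x : ℚ) : ℚ :=
  ys (s - 1) + segSlope xs ys s * (x - xs (s - 1))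

lemma segSlope_tsub {e : ℕ} {m : ℕ → ℕ} {s : ℕ} (hs : m s ≤ e) (hs' : m (s - 1) ≤ e) :
    segSlope (fun s ↦ e - m s) ys s = (ys s - ys (s - 1)) / ((m (s - 1) : ℚ) - m s) := by
  simp only [segSlope, Nat.cast_sub hs, Nat.cast_sub hs', sub_sub_sub_cancel_left]

lemma segLine_sub_segLine (s : ℕ) (x y : ℚ) :
    segLine xs ys s x - segLine xs ys s y = segSlope xs ys s * (x - y) := by
  unfold segLine; ring

lemma segLine_left (s : ℕ) : segLine xs ys s (xs (s - 1)) = ys (s - 1) := by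
  simp [segLine]

lemma segLine_right {s : ℕ} (hs : xs (s - 1) ≠ xs s) : segLine xs ys s (xs s) = ys s := by
  have : (xs s : ℚ) - xs (s - 1) ≠ 0 := sub_ne_zero.2 (by exact_mod_cast hs.symm)
  simp only [segLine, segSlope, div_mul_cancel₀ _ this]
  ring

lemma segSlope_stretch {D : ℕ} (s : ℕ) :
    segSlope (fun s ↦ D * xs s) ys s = segSlope xs ys s / D := by
  simp only [segSlope, Nat.cast_mul, ← mul_sub]
  rw [mul_comm, div_mul_eq_div_div]

lemma segLine_stretch {D : ℕ} (hD : D ≠ 0) (s : ℕ) (x : ℚ) :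
    segLine (fun s ↦ D * xs s) ys s x = segLine xs ys s (x / D) := by
  have : (D : ℚ) ≠ 0 := by exact_mod_cast hD
  simp only [segLine, segSlope_stretch, Nat.cast_mul]
  field_simp

lemma segLine_le_segLine_of_le_of_le {s j : ℕ} {a b x : ℚ}
    (ha : segLine xs ys s a ≤ segLine xs ys j a) (hb : segLine xs ys s b ≤ segLine xs ys j b)
    (hax : a ≤ x) (hxb : x ≤ b) : segLine xs ys s x ≤ segLine xs ys j x := by
  have hxa := segLine_sub_segLine (xs := xs) (ys := ys) s x a
  have hxa' := segLine_sub_segLine (xs := xs) (ys := ys) j x a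
  have hxb := segLine_sub_segLine (xs := xs) (ys := ys) s x b
  have hxb' := segLine_sub_segLine (xs := xs) (ys := ys) j x b
  rcases le_total (segSlope xs ys s) (segSlope xs ys j) with h | h
  · nlinarith
  · nlinarith

lemma exists_segment_mem {t x : ℕ} (ht : 1 ≤ t) (h0 : xs 0 ≤ x) (hxt : x ≤ xs t) :
    ∃ j, 1 ≤ j ∧ j ≤ t ∧ xs (j - 1) ≤ x ∧ x ≤ xs j := by
  induction t with
  | zero => omega
  | succ t ih =>
    by_cases h : 1 ≤ t ∧ x ≤ xs t
    · obtain ⟨j, hj⟩ := ih h.1 h.2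
      exact ⟨j, hj.1, by omega, hj.2.2⟩
    · refine ⟨t + 1, by omega, le_rfl, ?_, hxt⟩
      rcases Nat.eq_zero_or_pos t with rfl | ht
      · exact h0
      · simp only [Nat.add_sub_cancel]; omega

end Segments

namespace HasNPVertices

variable {p t : ℕ} {h : ℚ[X]} {xs : ℕ → ℕ} {ys : ℕ → ℚ}

lemma segSlope_lt_segSlope (hh : HasNPVertices p h t xs ys) {s : ℕ} (hs : 1 ≤ s)
    (hst : s < t) :
    segSlope xs ys s < segSlope xs ys (s + 1) :=
  hh.2.2.2.2.2.1 s hs hst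

lemma xs_sub_one_lt (hh : HasNPVertices p h t xs ys) {s : ℕ} (hs : 1 ≤ s) (hst : s ≤ t) :
    xs (s - 1) < xs s := by
  simpa [Nat.sub_add_cancel hs] using hh.2.2.2.1 (s - 1) (by omega)

lemma xs_le_natDegree (hh : HasNPVertices p h t xs ys) {s : ℕ} (hst : s ≤ t) :
    xs s ≤ h.natDegree := by
  have hmono : MonotoneOn xs (Set.Icc 0 t) :=
    monotoneOn_of_le_add_one Set.ordConnected_Icc fun j _ _ hj ↦ (hh.2.2.2.1 j hj.2).le
  exact hh.2.2.1 ▸ hmono ⟨Nat.zero_le s, hst⟩ ⟨Nat.zero_le t, le_rfl⟩ hst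

lemma monotoneOn_segSlope (hh : HasNPVertices p h t xs ys) :
    MonotoneOn (segSlope xs ys) (Set.Icc 1 t) :=
  (strictMonoOn_of_lt_add_one (f := segSlope xs ys) Set.ordConnected_Icc fun _ _ ha ha' ↦
    hh.segSlope_lt_segSlope ha.1 ha'.2).monotoneOn

lemma segLine_le_vertex (hh : HasNPVertices p h t xs ys) {s r : ℕ} (hs : 1 ≤ s) (hst : s ≤ t)
    (hr : r ≤ t) : segLine xs ys s (xs r) ≤ ys r := by
  have hmono := hh.monotoneOn_segSlope
  have hlt := hh.xs_sub_one_lt hs hst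
  obtain ⟨-, -, -, hxs, -, -, -⟩ := hh
  set φ : ℕ → ℚ := fun j ↦ ys j - segLine xs ys s (xs j)
  -- `φ` changes by `(λ_{j+1} - λ_s) Δx` from `j` to `j + 1`: it decreases up to `s`,
  -- increases from `s - 1` on, and vanishes at both.
  have hstep : ∀ j, j < t →
      φ (j + 1) - φ j = (segSlope xs ys (j + 1) - segSlope xs ys s) * (xs (j + 1) - xs j) := by
    intro j hj
    have hΔ : ((xs (j + 1) : ℚ) - xs j) ≠ 0 := sub_ne_zero.2 (by exact_mod_cast (hxs j hj).ne')
    have hy : ys (j + 1) - ys j = segSlope xs ys (j + 1) * (xs (j + 1) - xs j) := by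
      simp only [segSlope, Nat.add_sub_cancel, div_mul_cancel₀ _ hΔ]
    have := segLine_sub_segLine (xs := xs) (ys := ys) s (xs (j + 1)) (xs j)
    simp only [φ]
    linear_combination hy - this
  have hΔ : ∀ j, j < t → (0 : ℚ) ≤ xs (j + 1) - xs j := fun j hj ↦
    sub_nonneg.2 (by exact_mod_cast (hxs j hj).le)
  suffices 0 ≤ φ r by simpa [φ] using this
  rcases le_or_gt (s - 1) r with hsr | hrs
  · have hφ : MonotoneOn φ (Set.Icc (s - 1) t) :=
      monotoneOn_of_le_add_one Set.ordConnected_Icc fun j _ ⟨hj, _⟩ ⟨_, hj'⟩ ↦ by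
        have := hmono ⟨hs, hst⟩ ⟨by omega, hj'⟩ (by omega : s ≤ j + 1)
        nlinarith [hstep j hj', hΔ j hj']
    have := hφ ⟨le_rfl, by omega⟩ ⟨hsr, hr⟩ hsr
    simpa [φ, segLine_left] using this
  · have hφ : AntitoneOn φ (Set.Icc 0 s) :=
      antitoneOn_of_add_one_le Set.ordConnected_Icc fun j _ _ ⟨_, hj'⟩ ↦ by
        have := hmono ⟨by omega, by omega⟩ ⟨hs, hst⟩ hj'
        nlinarith [hstep j (by omega), hΔ j (by omega)]
    have := hφ ⟨Nat.zero_le r, by omega⟩ ⟨Nat.zero_le s, le_rfl⟩ (by omega)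
    simpa [φ, segLine_right hlt.ne] using this

lemma segLine_le_nuQ_coeff (hh : HasNPVertices p h t xs ys) {s : ℕ} (hs : 1 ≤ s) (hst : s ≤ t)
    {i : ℕ} (hi : h.coeff i ≠ 0) :
    segLine xs ys s (h.natDegree - i : ℕ) ≤ nuQ p (h.coeff i) := by
  obtain ⟨j, hj, hjt, hjl, hjr⟩ := exists_segment_mem (xs := xs) (t := t)
    (x := h.natDegree - i) (by omega) (by rw [hh.2.1]; omega) (by rw [hh.2.2.1]; omega)
  have hleft : segLine xs ys s (xs (j - 1)) ≤ segLine xs ys j (xs (j - 1)) := by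
    rw [segLine_left]; exact hh.segLine_le_vertex hs hst (by omega)
  have hright : segLine xs ys s (xs j) ≤ segLine xs ys j (xs j) := by
    rw [segLine_right (hh.xs_sub_one_lt hj hjt).ne]; exact hh.segLine_le_vertex hs hst hjt
  calc segLine xs ys s (h.natDegree - i : ℕ)
      ≤ segLine xs ys j (h.natDegree - i : ℕ) :=
        segLine_le_segLine_of_le_of_le hleft hright (by exact_mod_cast hjl)
          (by exact_mod_cast hjr)
    _ ≤ nuQ p (h.coeff i) := hh.2.2.2.2.2.2 j hj hjt i hi hjl hjr

section Comp

variable [Fact p.Prime] {g F : ℚ[X]} {D : ℕ} {c : ℚ}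

lemma segLine_le_nuQ_coeff_comp (hg : HasNPVertices p g t xs ys)
    (hF : NewtonDiagramAbove p c D F) (hD : D ≠ 0) {s : ℕ} (hs : 1 ≤ s) (hst : s ≤ t)
    (hslope : segSlope xs ys s ≤ c * D) {i : ℕ}
    (hi : (g.comp F).coeff i ≠ 0) :
    segLine xs ys s (g.natDegree - i / D) ≤ nuQ p ((g.comp F).coeff i) := by
  have hDpos : (0 : ℚ) < D := by exact_mod_cast Nat.pos_of_ne_zero hD
  rw [coeff_comp_eq_sum] at hi ⊢
  refine le_nuQ_sum hi fun k _ hk ↦ ?_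
  have hb := hg.segLine_le_nuQ_coeff hs hst (left_ne_zero_of_mul hk)
  obtain ⟨hik, hFk⟩ := hF.pow k i (right_ne_zero_of_mul hk)
  have hke : k ≤ g.natDegree := le_natDegree_of_ne_zero (left_ne_zero_of_mul hk)
  have hik : (0 : ℚ) ≤ k * D - i := sub_nonneg.2 (by exact_mod_cast hik)
  rw [nuQ_mul (left_ne_zero_of_mul hk) (right_ne_zero_of_mul hk)]
  push_cast [hke] at hb hFk
  -- `b_k (F^k)_i` lies `c (k D - i)` above `b_k`, which lies above the edge, and `λ_s / D ≤ c`
  calc segLine xs ys s (g.natDegree - i / D)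
      = segLine xs ys s (g.natDegree - k) + segSlope xs ys s / D * (k * D - i) := by
        rw [← sub_eq_iff_eq_add', segLine_sub_segLine]; field_simp; ring
    _ ≤ segLine xs ys s (g.natDegree - k) + c * (k * D - i) := by
        gcongr; rwa [div_le_iff₀ hDpos]
    _ ≤ _ := add_le_add hb hFk

lemma coeff_comp_vertex (hg : HasNPVertices p g t xs ys) (hFdeg : F.natDegree = D) (hD : 0 < D)
    (hlc : padicValRat p F.leadingCoeff = 0) (hF : NewtonDiagramAbove p c D F)
    (hslope : ∀ s, 1 ≤ s → s ≤ t → segSlope xs ys s < c * D) {s : ℕ} (hst : s ≤ t) :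
    (g.comp F).coeff (D * (g.natDegree - xs s)) ≠ 0 ∧
      nuQ p ((g.comp F).coeff (D * (g.natDegree - xs s))) = ys s := by
  obtain ⟨hbm, hνm⟩ := hg.2.2.2.2.1 s hst
  have hxs := hg.xs_le_natDegree hst
  generalize hm : g.natDegree - xs s = m at hbm hνm ⊢
  have hF0 : F.leadingCoeff ≠ 0 := by
    simpa using ne_zero_of_natDegree_gt (hFdeg ▸ hD)
  have hlead : (F ^ m).coeff (D * m) = F.leadingCoeff ^ m := by
    rw [mul_comm, ← hFdeg, coeff_pow_mul_natDegree]
  have hterm : nuQ p (g.coeff m * (F ^ m).coeff (D * m)) = ys s := by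
    rw [hlead, nuQ_mul hbm (pow_ne_zero _ hF0), nuQ_pow, hνm]
    simp [nuQ, hlc]
  rw [coeff_comp_eq_sum, ← hterm]
  refine nuQ_sum_eq_of_lt (f := fun k ↦ g.coeff k * (F ^ k).coeff (D * m))
    (mem_support_iff.2 hbm) (by simp [hlead, hbm, hF0]) fun k _ hkm hk ↦ ?_
  -- any other contributing `b_k` has `k > m`; it lies above the edge ending at vertex `s`
  -- and gains `c D (k - m) > λ_s (k - m)`.
  have hbk := left_ne_zero_of_mul hk
  obtain ⟨hkD, hFk⟩ := hF.pow k (D * m) (right_ne_zero_of_mul hk)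
  have hke : k ≤ g.natDegree := le_natDegree_of_ne_zero hbk
  have hmk : m < k := lt_of_le_of_ne
    (Nat.le_of_mul_le_mul_right (by rwa [mul_comm] at hkD) hD) (Ne.symm hkm)
  have hs : 1 ≤ s := by
    by_contra h0
    obtain rfl : s = 0 := by omega
    rw [hg.2.1] at hm; omega
  have hb := hg.segLine_le_nuQ_coeff hs hst hbk
  have hline := segLine_sub_segLine (xs := xs) (ys := ys) s (g.natDegree - k : ℕ) (xs s)
  rw [segLine_right (hg.xs_sub_one_lt hs hst).ne] at hline
  have hsl := hslope s hs hst
  rw [hterm, nuQ_mul hbk (right_ne_zero_of_mul hk)]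
  have hmkQ : (m : ℚ) < k := by exact_mod_cast hmk
  have hxsQ : (xs s : ℚ) = g.natDegree - m := by rw [← hm]; push_cast [hxs]; ring
  push_cast [hke] at hb hline hFk
  rw [hxsQ] at hline
  nlinarith [mul_pos (sub_pos.2 hsl) (sub_pos.2 hmkQ)]

theorem comp (hg : HasNPVertices p g t xs ys) (hFdeg : F.natDegree = D) (hD : 0 < D)
    (hlc : padicValRat p F.leadingCoeff = 0) (hF : NewtonDiagramAbove p c D F)
    (hslope : ∀ s, 1 ≤ s → s ≤ t → segSlope xs ys s < c * D) :
    HasNPVertices p (g.comp F) t (fun s ↦ D * xs s) ys := by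
  have hdeg : (g.comp F).natDegree = D * g.natDegree := by rw [natDegree_comp, hFdeg, mul_comm]
  have hindex : ∀ s, s ≤ t → (g.comp F).natDegree - D * xs s = D * (g.natDegree - xs s) :=
    fun s _ ↦ by rw [hdeg, Nat.mul_sub]
  refine ⟨?_, by simp [hg.2.1], by simp [hg.2.2.1, hdeg], fun s hs ↦ ?_, fun s hs ↦ ?_,
    fun s hs hst ↦ ?_, fun s hs hst i hi _ _ ↦ ?_⟩
  · simpa [hg.2.2.1] using (hg.coeff_comp_vertex hFdeg hD hlc hF hslope le_rfl).1
  · exact Nat.mul_lt_mul_of_pos_left (hg.2.2.2.1 s hs) hD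
  · rw [hindex s hs]; exact hg.coeff_comp_vertex hFdeg hD hlc hF hslope hs
  · change segSlope (fun s ↦ D * xs s) ys s < segSlope (fun s ↦ D * xs s) ys (s + 1)
    rw [segSlope_stretch, segSlope_stretch]
    exact div_lt_div_of_pos_right (hg.segSlope_lt_segSlope hs hst) (by exact_mod_cast hD)
  · change segLine (fun s ↦ D * xs s) ys s ((g.comp F).natDegree - i : ℕ) ≤ _
    have hi' : i ≤ (g.comp F).natDegree := le_natDegree_of_ne_zero hi
    rw [segLine_stretch hD.ne', Nat.cast_sub hi', hdeg]
    convert hg.segLine_le_nuQ_coeff_comp hF hD.ne' hs hst (hslope s hs hst).le hi using 2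
    push_cast
    field_simp

end Comp

end HasNPVertices

theorem newton_polygon_comp_iterate_general_general
    (p : ℕ) (hp : p.Prime)
    (g f : Polynomial ℚ) (e d t : ℕ) (m : ℕ → ℕ)
    (hge : g.natDegree = e) (he1 : 1 ≤ e)
    (hm0 : m 0 = e)
    (hNPg : HasNPVertices p g t (fun s => e - m s) (fun s => nuQ p (g.coeff (m s))))
    (u : ℤ) (β : ℕ) (hβ : 1 ≤ β) (hβd : β ≤ d)
    (hu : ∀ j, 1 ≤ j → j ≤ t →
      |(nuQ p (g.coeff (m j)) - nuQ p (g.coeff (m (j - 1)))) /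
          ((m (j - 1) : ℚ) - (m j : ℚ))| < (u : ℚ))
    (hfd : f.natDegree = d)
    (had : padicValRat p (f.coeff d) = 0)
    (hai : ∀ i, i ≤ d → f.coeff i ≠ 0 →
      (u : ℚ) / (β : ℚ) * ((d : ℚ) - (i : ℚ)) ≤ nuQ p (f.coeff i)) :
    ∀ n : ℕ, 1 ≤ n →
      HasNPVertices p (g.comp (polyIter f n)) t
        (fun s => d ^ n * (e - m s)) (fun s => nuQ p (g.coeff (m s))) := by
  have : Fact p.Prime := ⟨hp⟩
  rintro n hn
  obtain ⟨n, rfl⟩ : ∃ k, n = k + 1 := ⟨n - 1, by omega⟩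
  have ht : 1 ≤ t := by
    by_contra h0
    have hxt : e - m t = g.natDegree := hNPg.2.2.1
    obtain rfl : t = 0 := by omega
    omega
  have hme : ∀ s, s ≤ t → m s ≤ e := fun s hst ↦ by
    rcases Nat.eq_zero_or_pos s with rfl | hs
    · exact hm0.le
    · have := hNPg.xs_sub_one_lt hs hst; omega
  have hslope : ∀ j, 1 ≤ j → j ≤ t →
      segSlope (fun s ↦ e - m s) (fun s ↦ nuQ p (g.coeff (m s))) j < u := fun j hj hjt ↦ by
    rw [segSlope_tsub (hme j hjt) (hme (j - 1) (by omega))]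
    exact (le_abs_self _).trans_lt (hu j hj hjt)
  have hu0 : (0 : ℚ) ≤ u := (abs_nonneg _).trans (hu 1 le_rfl ht).le
  have hβ0 : (0 : ℚ) < β := by exact_mod_cast hβ
  have hd : 0 < d := by omega
  have hf : NewtonDiagramAbove p (u / β) d f := fun i hi ↦
    have hid : i ≤ d := hfd ▸ le_natDegree_of_ne_zero hi
    ⟨hid, hai i hid hi⟩
  have hlc : padicValRat p f.leadingCoeff = 0 := by rwa [leadingCoeff, hfd]
  refine hNPg.comp (by rw [natDegree_polyIter, hfd]) (by positivity)
    (padicValRat_leadingCoeff_polyIter (by omega) hlc _) (hf.polyIter_succ (by positivity) hd n)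
    fun s hs hst ↦ (hslope s hs hst).trans_le ?_
  calc (u : ℚ) ≤ u / β * d := by
        rw [div_mul_eq_mul_div, le_div_iff₀ hβ0]; gcongr
    _ = u / β / d ^ n * (d ^ (n + 1) : ℕ) := by
        have : (d : ℚ) ≠ 0 := by exact_mod_cast hd.ne'
        push_cast; field_simp; ring

/-- Corollary 1.7: stretching of the Newton polygon under composition with all
iterates of `f`. -/
theorem newton_polygon_comp_iterate_general
    (p : ℕ) (hp : p.Prime)
    (g f : Polynomial ℚ) (e d t : ℕ) (m : ℕ → ℕ)
    (hge : g.natDegree = e) (he1 : 1 ≤ e)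
    (hb0 : g.coeff 0 ≠ 0)
    (hm0 : m 0 = e) (hmt : m t = 0)
    (hmdec : ∀ s, s < t → m (s + 1) < m s)
    (hNPg : HasNPVertices p g t (fun s => e - m s) (fun s => nuQ p (g.coeff (m s))))
    (u : ℤ) (β : ℕ) (hβ : 1 ≤ β) (hβd : β ≤ d)
    (hgcdβu : Int.gcd (β : ℤ) u = 1)
    (hu : ∀ j, 1 ≤ j → j ≤ t →
      |(nuQ p (g.coeff (m j)) - nuQ p (g.coeff (m (j - 1)))) /
          ((m (j - 1) : ℚ) - (m j : ℚ))| < (u : ℚ))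
    (hfd : f.natDegree = d)
    (had : padicValRat p (f.coeff d) = 0)
    (hai : ∀ i, i ≤ d → f.coeff i ≠ 0 →
      (u : ℚ) / (β : ℚ) * ((d : ℚ) - (i : ℚ)) ≤ nuQ p (f.coeff i)) :
    ∀ n : ℕ, 1 ≤ n →
      HasNPVertices p (g.comp (polyIter f n)) t
        (fun s => d ^ n * (e - m s)) (fun s => nuQ p (g.coeff (m s))) :=
  newton_polygon_comp_iterate_general_general p hp g f e d t m hge he1 hm0 hNPg u β hβ hβd hu hfd
    had hai
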